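/- For u, v ∈ ℝ³ with v constrained to rotate about a unit vector k, writing φ for the angle between P(v) and P(u) in the plane orthogonal to k (both projections nonzero), the inner product satisfies ⟨R_φ v, u⟩ = ⟨v,k⟩⟨u,k⟩ + ‖P(v)‖‖P(u)‖ cos φ, where R_φ is the rotation about k by the angle that makes the projections form angle φ. In particular ⟨R_φ v, u⟩ is maximized at φ = 0 and minimized at φ = π. -/

import Mathlib

/-!
Splitting along the unit axis `k` gives `⟪R v, u⟫ = ⟪v, k⟫ ⟪u, k⟫ + ⟪P (R v), P u⟫`, and a rotation
about `k` commutes with `P` and preserves norms, so the second term is `‖P v‖ ‖P u‖ cos φ`; this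
lies between `-‖P v‖ ‖P u‖` and `‖P v‖ ‖P u‖`. Both bounds are attained because any two vectors of
the same norm in `kᗮ` are exchanged by a rotation about `k`: the reflection swapping them, followed
by the reflection in a plane through `k` and the target vector.
-/

open scoped RealInnerProductSpace

noncomputable section

/-- 3-dimensional Euclidean space. -/
abbrev V := EuclideanSpace ℝ (Fin 3)

/-- Projection of `x` onto the plane with normal `k`. -/
def proj (k x : V) : V := x - (⟪x, k⟫ / ‖k‖ ^ 2) • k

/-- `R` is a rotation about the axis `k`: an orientation-preserving linear isometry fixing `k`. -/
def IsRotationAbout (k : V) (R : V ≃ₗᵢ[ℝ] V) : Prop :=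
  R k = k ∧ LinearMap.det (R.toLinearEquiv : V →ₗ[ℝ] V) = 1

/-- The cross product on `ℝ³`. -/
def cross (x y : V) : V :=
  (EuclideanSpace.equiv (Fin 3) ℝ).symm
    (crossProduct ((EuclideanSpace.equiv (Fin 3) ℝ) x) ((EuclideanSpace.equiv (Fin 3) ℝ) y))

/-- The rotation angle of a rotation in `SO(3)`, recovered from its trace. -/
def rotAngle (R : V ≃ₗᵢ[ℝ] V) : ℝ :=
  Real.arccos ((LinearMap.trace ℝ V (R.toLinearEquiv : V →ₗ[ℝ] V) - 1) / 2)

open InnerProductGeometry Module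

section Reflections

variable {E : Type*} [NormedAddCommGroup E] [InnerProductSpace ℝ E]

lemma Submodule.reflection_orthogonal_span_singleton_apply_of_inner_eq_zero {w x : E}
    (h : ⟪w, x⟫ = 0) : (ℝ ∙ w)ᗮ.reflection x = x :=
  Submodule.reflection_mem_subspace_eq_self (Submodule.mem_orthogonal_singleton_iff_inner_right.2 h)

variable [FiniteDimensional ℝ E]

lemma Submodule.det_reflection_orthogonal_span_singleton {w : E} (hw : w ≠ 0) :
    LinearMap.det (ℝ ∙ w)ᗮ.reflection.toLinearMap = -1 := by
  rw [Submodule.det_reflection, Submodule.orthogonal_orthogonal, finrank_span_singleton hw,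
    pow_one]

lemma exists_ne_zero_inner_eq_zero_inner_eq_zero (hE : 2 < finrank ℝ E) (a b : E) :
    ∃ w ≠ 0, ⟪w, a⟫ = 0 ∧ ⟪w, b⟫ = 0 := by
  set K := Submodule.span ℝ (Set.range ![a, b])
  have hK : finrank ℝ K ≤ 2 :=
    (finrank_range_le_card (R := ℝ) ![a, b]).trans_eq (Fintype.card_fin 2)
  have hKperp : Kᗮ ≠ ⊥ := by
    intro h
    have := K.finrank_add_finrank_orthogonal
    rw [h, finrank_bot] at this
    omega
  obtain ⟨w, hwK, hw⟩ := Submodule.exists_mem_ne_zero_of_ne_bot hKperp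
  have hperp (i : Fin 2) : ⟪w, ![a, b] i⟫ = 0 :=
    (Submodule.mem_orthogonal' K w).1 hwK _ (Submodule.subset_span ⟨i, rfl⟩)
  exact ⟨w, hw, hperp 0, hperp 1⟩

end Reflections

lemma exists_isRotationAbout_apply_eq {k x y : V} (hxy : ‖x‖ = ‖y‖) (hk : ⟪x, k⟫ = ⟪y, k⟫) :
    ∃ R : V ≃ₗᵢ[ℝ] V, IsRotationAbout k R ∧ R x = y := by
  by_cases hxy' : x = y
  · exact ⟨LinearIsometryEquiv.refl ℝ V, ⟨rfl, LinearMap.det_id⟩, hxy'⟩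
  obtain ⟨w, hw, hwk, hwy⟩ := exists_ne_zero_inner_eq_zero_inner_eq_zero (by simp) k y
  have hxyk : ⟪x - y, k⟫ = 0 := by rw [inner_sub_left, hk, sub_self]
  refine ⟨(ℝ ∙ (x - y))ᗮ.reflection.trans (ℝ ∙ w)ᗮ.reflection, ⟨?_, ?_⟩, ?_⟩
  · simp only [LinearIsometryEquiv.trans_apply,
      Submodule.reflection_orthogonal_span_singleton_apply_of_inner_eq_zero hxyk,
      Submodule.reflection_orthogonal_span_singleton_apply_of_inner_eq_zero hwk]
  · rw [LinearIsometryEquiv.toLinearEquiv_trans, LinearEquiv.coe_trans, LinearMap.det_comp,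
      Submodule.det_reflection_orthogonal_span_singleton hw,
      Submodule.det_reflection_orthogonal_span_singleton (sub_ne_zero.2 hxy'), neg_one_mul, neg_neg]
  · rw [LinearIsometryEquiv.trans_apply, Submodule.reflection_sub hxy,
      Submodule.reflection_orthogonal_span_singleton_apply_of_inner_eq_zero hwy]

lemma inner_proj_self (k x : V) : ⟪proj k x, k⟫ = 0 := by
  rcases eq_or_ne k 0 with rfl | hk
  · simp
  rw [proj, inner_sub_left, real_inner_smul_left, real_inner_self_eq_norm_sq]
  field_simp [norm_ne_zero_iff.2 hk]
  ring

lemma proj_of_norm_eq_one {k : V} (hk : ‖k‖ = 1) (x : V) : proj k x = x - ⟪x, k⟫ • k := by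
  simp [proj, hk]

lemma inner_eq_inner_mul_inner_add_inner_proj {k : V} (hk : ‖k‖ = 1) (x y : V) :
    ⟪x, y⟫ = ⟪x, k⟫ * ⟪y, k⟫ + ⟪proj k x, proj k y⟫ := by
  have hkk : ⟪k, k⟫ = 1 := by rw [real_inner_self_eq_norm_sq, hk, one_pow]
  simp only [proj_of_norm_eq_one hk, inner_sub_left, inner_sub_right, real_inner_smul_left,
    real_inner_smul_right, hkk, real_inner_comm k y]
  ring

namespace IsRotationAbout

variable {k : V} {R : V ≃ₗᵢ[ℝ] V}

lemma inner_map_axis (hR : IsRotationAbout k R) (x : V) : ⟪R x, k⟫ = ⟪x, k⟫ := by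
  conv_lhs => rw [← hR.1]
  exact R.inner_map_map x k

lemma proj_map (hR : IsRotationAbout k R) (x : V) : proj k (R x) = R (proj k x) := by
  rw [proj, proj, hR.inner_map_axis, map_sub, map_smul, hR.1]

lemma inner_map_eq (hk : ‖k‖ = 1) (hR : IsRotationAbout k R) (u v : V) :
    ⟪R v, u⟫ = ⟪v, k⟫ * ⟪u, k⟫ +
      ‖proj k v‖ * ‖proj k u‖ * Real.cos (angle (proj k (R v)) (proj k u)) := by
  rw [inner_eq_inner_mul_inner_add_inner_proj hk, hR.inner_map_axis,
    ← cos_angle_mul_norm_mul_norm (proj k (R v)), hR.proj_map, LinearIsometryEquiv.norm_map]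
  ring

end IsRotationAbout

lemma exists_isRotationAbout_proj_map_eq {k v w : V} (hw : ⟪w, k⟫ = 0)
    (hnorm : ‖proj k v‖ = ‖w‖) : ∃ R : V ≃ₗᵢ[ℝ] V, IsRotationAbout k R ∧ proj k (R v) = w := by
  obtain ⟨R, hR, hRv⟩ := exists_isRotationAbout_apply_eq hnorm (by rw [inner_proj_self, hw])
  exact ⟨R, hR, by rw [hR.proj_map, hRv]⟩

lemma exists_isRotationAbout_proj_map_eq_smul {k u : V} (v : V) (hu : proj k u ≠ 0) {ε : ℝ}
    (hε : |ε| = 1) : ∃ R : V ≃ₗᵢ[ℝ] V, IsRotationAbout k R ∧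
      proj k (R v) = (ε * (‖proj k v‖ / ‖proj k u‖)) • proj k u := by
  refine exists_isRotationAbout_proj_map_eq
    (by rw [real_inner_smul_left, inner_proj_self, mul_zero]) ?_
  rw [norm_smul, Real.norm_eq_abs, abs_mul, hε, one_mul, abs_of_nonneg (by positivity),
    div_mul_cancel₀ _ (norm_ne_zero_iff.2 hu)]

theorem stmt12 (k : V) (hk : ‖k‖ = 1) (u v : V)
    (hu : proj k u ≠ 0) (hv : proj k v ≠ 0)
    (R : V ≃ₗᵢ[ℝ] V) (hR : IsRotationAbout k R) :
    (⟪R v, u⟫ = ⟪v, k⟫ * ⟪u, k⟫ +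
        ‖proj k v‖ * ‖proj k u‖ *
          Real.cos (InnerProductGeometry.angle (proj k (R v)) (proj k u))) ∧
    (⟪R v, u⟫ ≤ ⟪v, k⟫ * ⟪u, k⟫ + ‖proj k v‖ * ‖proj k u‖ * Real.cos 0) ∧
    (⟪v, k⟫ * ⟪u, k⟫ + ‖proj k v‖ * ‖proj k u‖ * Real.cos Real.pi ≤ ⟪R v, u⟫) ∧
    (∃ R0 : V ≃ₗᵢ[ℝ] V, IsRotationAbout k R0 ∧
      InnerProductGeometry.angle (proj k (R0 v)) (proj k u) = 0 ∧
      ⟪R0 v, u⟫ = ⟪v, k⟫ * ⟪u, k⟫ + ‖proj k v‖ * ‖proj k u‖) ∧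
    (∃ R1 : V ≃ₗᵢ[ℝ] V, IsRotationAbout k R1 ∧
      InnerProductGeometry.angle (proj k (R1 v)) (proj k u) = Real.pi ∧
      ⟪R1 v, u⟫ = ⟪v, k⟫ * ⟪u, k⟫ - ‖proj k v‖ * ‖proj k u‖) := by
  have hc : 0 < ‖proj k v‖ / ‖proj k u‖ := by positivity
  obtain ⟨R0, hR0, hR0v⟩ := exists_isRotationAbout_proj_map_eq_smul v hu (ε := 1) (by simp)
  obtain ⟨R1, hR1, hR1v⟩ := exists_isRotationAbout_proj_map_eq_smul v hu (ε := -1) (by simp)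
  have hangle0 : angle (proj k (R0 v)) (proj k u) = 0 := by
    rw [hR0v, angle_smul_left_of_pos _ _ (by linarith), angle_self hu]
  have hangle1 : angle (proj k (R1 v)) (proj k u) = Real.pi := by
    rw [hR1v, angle_smul_left_of_neg _ _ (by linarith), angle_neg_left, angle_self hu, sub_zero]
  refine ⟨hR.inner_map_eq hk u v, ?_, ?_, ⟨R0, hR0, hangle0, ?_⟩, ⟨R1, hR1, hangle1, ?_⟩⟩
  · rw [hR.inner_map_eq hk, Real.cos_zero]
    gcongr
    exact Real.cos_le_one _
  · rw [hR.inner_map_eq hk, Real.cos_pi]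
    gcongr
    exact Real.neg_one_le_cos _
  · rw [hR0.inner_map_eq hk, hangle0, Real.cos_zero, mul_one]
  · rw [hR1.inner_map_eq hk, hangle1, Real.cos_pi]
    ring
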